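/- arXiv:2304.13466 — 2 statements merged into one kernel-verified Lean document; each statement's English description precedes it below -/
import Mathlib

section
/- For n ≥ t+6, the ratio μ_p(F_2^t)/μ_p(F_0^t) equals C(t+6,2) p^4 q^2 + (t+6) p^5 q + p^6, and its maximum over 0 < p ≤ p_0(t) is attained at p = p_0(t). -/
open Finset

/-- p-biased measure of a family on ground set of size `n` (= `[n]`). -/
def mu (p : ℝ) (n : ℕ) (G : Finset (Finset ℕ)) : ℝ :=
  ∑ A ∈ G, p ^ A.card * (1 - p) ^ (n - A.card)

/-- p-biased measure of a family on an arbitrary finite ground set `X`. -/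
def muOn (p : ℝ) (X : Finset ℕ) (G : Finset (Finset ℕ)) : ℝ :=
  ∑ A ∈ G, p ^ A.card * (1 - p) ^ (X.card - A.card)

/-- `F_0^t = {F ⊆ [n] : [t] ⊆ F}`. -/
def F0 (n t : ℕ) : Finset (Finset ℕ) :=
  (Finset.Icc 1 n).powerset.filter (fun F => Finset.Icc 1 t ⊆ F)

/-- `F_1^t = {F ⊆ [n] : |F ∩ [t+3]| ≥ t+2}`. -/
def F1 (n t : ℕ) : Finset (Finset ℕ) :=
  (Finset.Icc 1 n).powerset.filter (fun F => t + 2 ≤ (F ∩ Finset.Icc 1 (t + 3)).card)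

/-- `F_2^t = {F ⊆ [n] : |F ∩ [t+6]| ≥ t+4}`. -/
def F2 (n t : ℕ) : Finset (Finset ℕ) :=
  (Finset.Icc 1 n).powerset.filter (fun F => t + 4 ≤ (F ∩ Finset.Icc 1 (t + 6)).card)

/-- `p_0(t) = 2/(√(4t+9) − 1)`. -/
noncomputable def p0 (t : ℕ) : ℝ := 2 / (Real.sqrt (4 * t + 9) - 1)

/-- The family is `r`-wise `t`-intersecting: any `r` members (with repetition)
intersect in at least `t` elements. -/
def RWise (r t : ℕ) (G : Finset (Finset ℕ)) : Prop :=
  ∀ f : Fin r → Finset ℕ, (∀ k, f k ∈ G) → t ≤ (⋂ k, (f k : Set ℕ)).ncard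

/-- The shift `s_{i,j}` of a single set `A`, relative to the family `G`. -/
def shiftSet (i j : ℕ) (G : Finset (Finset ℕ)) (A : Finset ℕ) : Finset ℕ :=
  if A ∩ {i, j} = {j} ∧ (A.erase j ∪ {i}) ∉ G then A.erase j ∪ {i} else A

/-- The shifting operation `σ_{i,j}` applied to a family. -/
def shift (i j : ℕ) (G : Finset (Finset ℕ)) : Finset (Finset ℕ) :=
  G.image (shiftSet i j G)

/-- `G` and `H` are isomorphic as families on ground set `[n]`:
`H` is the image of `G` under a permutation preserving `[n]`. -/
def Iso (n : ℕ) (G H : Finset (Finset ℕ)) : Prop :=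
  ∃ τ : Equiv.Perm ℕ, (∀ x, x ∈ Finset.Icc 1 n ↔ τ x ∈ Finset.Icc 1 n) ∧
    H = G.image (fun A => A.image τ)

/-- `G` is `(3,t)`-maximal on `[n]`. -/
def Max3 (n t : ℕ) (G : Finset (Finset ℕ)) : Prop :=
  (∀ A ∈ G, A ⊆ Finset.Icc 1 n) ∧ RWise 3 t G ∧
    ∀ F : Finset ℕ, F ⊆ Finset.Icc 1 n → F ∉ G → ¬ RWise 3 t (insert F G)

/-- `G` is shifted on `[n]`. -/
def Shifted (n : ℕ) (G : Finset (Finset ℕ)) : Prop :=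
  ∀ i j : ℕ, 1 ≤ i → i < j → j ≤ n → shift i j G = G

/-- One shifting step. -/
def ShiftStep (n : ℕ) (G H : Finset (Finset ℕ)) : Prop :=
  ∃ i j : ℕ, 1 ≤ i ∧ i ≤ n ∧ 1 ≤ j ∧ j ≤ n ∧ H = shift i j G

lemma sum_pow_one (p : ℝ) (s : Finset ℕ) :
    ∑ B ∈ s.powerset, p ^ B.card * (1 - p) ^ (s.card - B.card) = 1 := by
  have h := Finset.prod_add (fun _ : ℕ => p) (fun _ : ℕ => 1 - p) s
  simp only [Finset.prod_const] at h
  have : ∀ B ∈ s.powerset, p ^ B.card * (1-p) ^ (s \ B).card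
      = p ^ B.card * (1 - p) ^ (s.card - B.card) := by
    intro B hB
    rw [Finset.card_sdiff_of_subset (Finset.mem_powerset.mp hB)]
  rw [Finset.sum_congr rfl this] at h
  simpa using h.symm

lemma key (p : ℝ) (s u : Finset ℕ) (hd : Disjoint s u) (Q : Finset ℕ → Prop) [DecidablePred Q] :
    ∑ F ∈ (s ∪ u).powerset.filter (fun F => Q (F ∩ s)),
        p ^ F.card * (1 - p) ^ (s.card + u.card - F.card)
      = ∑ C ∈ s.powerset.filter Q, p ^ C.card * (1 - p) ^ (s.card - C.card) := by
  have := sum_pow_one p u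
  calc ∑ F ∈ (s ∪ u).powerset.filter (fun F => Q (F ∩ s)),
        p ^ F.card * (1 - p) ^ (s.card + u.card - F.card)
      = ∑ x ∈ (s.powerset.filter Q) ×ˢ u.powerset,
          (p ^ x.1.card * (1 - p) ^ (s.card - x.1.card)) *
          (p ^ x.2.card * (1 - p) ^ (u.card - x.2.card)) := by
        apply Finset.sum_nbij' (i := fun F => (F ∩ s, F ∩ u)) (j := fun x => x.1 ∪ x.2)
        · intro F hF
          simp only [Finset.mem_filter, Finset.mem_powerset] at hF
          simp only [Finset.mem_product, Finset.mem_filter, Finset.mem_powerset]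
          exact ⟨⟨Finset.inter_subset_right, hF.2⟩, Finset.inter_subset_right⟩
        · intro x hx
          simp only [Finset.mem_product, Finset.mem_filter, Finset.mem_powerset] at hx
          simp only [Finset.mem_filter, Finset.mem_powerset]
          constructor
          · exact Finset.union_subset_union hx.1.1 hx.2
          · have h1 : x.1 ∩ s = x.1 := Finset.inter_eq_left.mpr hx.1.1
            have h2 : x.2 ∩ s = ∅ := by
              rw [← Finset.disjoint_iff_inter_eq_empty]
              exact (hd.symm.mono_left hx.2)
            rw [Finset.union_inter_distrib_right, h1, h2, Finset.union_empty]
            exact hx.1.2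
        · intro F hF
          simp only [Finset.mem_filter, Finset.mem_powerset] at hF
          rw [← Finset.inter_union_distrib_left, Finset.inter_eq_left.mpr hF.1]
        · intro x hx
          simp only [Finset.mem_product, Finset.mem_filter, Finset.mem_powerset] at hx
          have h1 : x.1 ∩ s = x.1 := Finset.inter_eq_left.mpr hx.1.1
          have h2 : x.2 ∩ s = ∅ := by
            rw [← Finset.disjoint_iff_inter_eq_empty]; exact (hd.symm.mono_left hx.2)
          have h3 : x.1 ∩ u = ∅ := by
            rw [← Finset.disjoint_iff_inter_eq_empty]; exact (hd.mono_left hx.1.1)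
          have h4 : x.2 ∩ u = x.2 := Finset.inter_eq_left.mpr hx.2
          simp [Finset.union_inter_distrib_right, h1, h2, h3, h4]
        · intro F hF
          simp only [Finset.mem_filter, Finset.mem_powerset] at hF
          have hdis : Disjoint (F ∩ s) (F ∩ u) := hd.mono Finset.inter_subset_right Finset.inter_subset_right
          have hun : (F ∩ s) ∪ (F ∩ u) = F := by
            rw [← Finset.inter_union_distrib_left, Finset.inter_eq_left.mpr hF.1]
          have hcard : F.card = (F ∩ s).card + (F ∩ u).card := by
            rw [← Finset.card_union_of_disjoint hdis, hun]
          have hc1 : (F ∩ s).card ≤ s.card := Finset.card_le_card Finset.inter_subset_right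
          have hc2 : (F ∩ u).card ≤ u.card := Finset.card_le_card Finset.inter_subset_right
          have he : s.card + u.card - F.card = (s.card - (F ∩ s).card) + (u.card - (F ∩ u).card) := by
            omega
          rw [hcard]
          have he2 : #s + #u - (#(F ∩ s) + #(F ∩ u)) = (#s - #(F ∩ s)) + (#u - #(F ∩ u)) := by omega
          rw [he2, pow_add, pow_add]; ring
    _ = (∑ C ∈ s.powerset.filter Q, p ^ C.card * (1 - p) ^ (s.card - C.card)) *
          (∑ B ∈ u.powerset, p ^ B.card * (1 - p) ^ (u.card - B.card)) := by
        rw [Finset.sum_mul_sum]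
        rw [Finset.sum_product]
    _ = _ := by rw [sum_pow_one]; ring

lemma split_Icc (m n : ℕ) (h : m ≤ n) : Finset.Icc 1 n = Finset.Icc 1 m ∪ Finset.Ioc m n := by
  ext x
  simp only [Finset.mem_Icc, Finset.mem_union, Finset.mem_Ioc]
  omega

lemma mu_F0 (p : ℝ) (n t : ℕ) (h : t ≤ n) : mu p n (F0 n t) = p ^ t := by
  have hd : Disjoint (Finset.Icc 1 t) (Finset.Ioc t n) := by
    apply Finset.disjoint_left.mpr
    intro a ha hb
    simp only [Finset.mem_Icc, Finset.mem_Ioc] at ha hb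
    omega
  have hk := key p (Finset.Icc 1 t) (Finset.Ioc t n) hd (fun C => Finset.Icc 1 t ⊆ C)
  rw [mu, F0]
  have hcard : (Finset.Icc 1 t).card + (Finset.Ioc t n).card = n := by
    rw [Nat.card_Icc, Nat.card_Ioc]; omega
  have hset : Finset.Icc 1 n = Finset.Icc 1 t ∪ Finset.Ioc t n := split_Icc t n h
  have hfil : (Finset.Icc 1 n).powerset.filter (fun F => Finset.Icc 1 t ⊆ F)
      = ((Finset.Icc 1 t ∪ Finset.Ioc t n)).powerset.filter
          (fun F => Finset.Icc 1 t ⊆ F ∩ Finset.Icc 1 t) := by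
    rw [← hset]
    apply Finset.filter_congr
    intro F _
    simp [Finset.subset_inter_iff]
  rw [hfil]
  have : ∀ F ∈ ((Finset.Icc 1 t ∪ Finset.Ioc t n)).powerset.filter
          (fun F => Finset.Icc 1 t ⊆ F ∩ Finset.Icc 1 t),
      p ^ F.card * (1-p) ^ (n - F.card)
      = p ^ F.card * (1-p) ^ ((Finset.Icc 1 t).card + (Finset.Ioc t n).card - F.card) := by
    intro F _; rw [hcard]
  rw [Finset.sum_congr rfl this, hk]
  have hone : (Finset.Icc 1 t).powerset.filter (fun C => Finset.Icc 1 t ⊆ C) = {Finset.Icc 1 t} := by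
    ext C
    simp only [Finset.mem_filter, Finset.mem_powerset, Finset.mem_singleton]
    constructor
    · rintro ⟨h1, h2⟩; exact Finset.Subset.antisymm h1 h2
    · rintro rfl; exact ⟨le_refl _, le_refl _⟩
  rw [hone, Finset.sum_singleton, Nat.card_Icc]
  simp

lemma sum_pcard (p : ℝ) (s : Finset ℕ) (k : ℕ) :
    ∑ C ∈ s.powersetCard k, p ^ C.card * (1 - p) ^ (s.card - C.card)
      = (s.card.choose k : ℝ) * p ^ k * (1 - p) ^ (s.card - k) := by
  have : ∀ C ∈ s.powersetCard k, p ^ C.card * (1-p) ^ (s.card - C.card)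
      = p ^ k * (1 - p) ^ (s.card - k) := by
    intro C hC
    rw [(Finset.mem_powersetCard.mp hC).2]
  rw [Finset.sum_congr rfl this, Finset.sum_const, Finset.card_powersetCard, nsmul_eq_mul]
  ring

lemma mu_F2 (p : ℝ) (n t : ℕ) (h : t + 6 ≤ n) :
    mu p n (F2 n t) = p ^ t * ((Nat.choose (t + 6) 2 : ℝ) * p ^ 4 * (1 - p) ^ 2
          + (t + 6 : ℝ) * p ^ 5 * (1 - p) + p ^ 6) := by
  set s := Finset.Icc 1 (t+6) with hs
  have hd : Disjoint s (Finset.Ioc (t+6) n) := by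
    apply Finset.disjoint_left.mpr
    intro a ha hb
    simp only [hs, Finset.mem_Icc, Finset.mem_Ioc] at ha hb
    omega
  have hscard : s.card = t + 6 := by rw [hs, Nat.card_Icc]; omega
  have hk := key p s (Finset.Ioc (t+6) n) hd (fun C => t + 4 ≤ C.card)
  rw [mu, F2]
  have hcard : s.card + (Finset.Ioc (t+6) n).card = n := by
    rw [hscard, Nat.card_Ioc]; omega
  have hset : Finset.Icc 1 n = s ∪ Finset.Ioc (t+6) n := split_Icc (t+6) n h
  have hfil : (Finset.Icc 1 n).powerset.filter (fun F => t + 4 ≤ (F ∩ s).card)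
      = ((s ∪ Finset.Ioc (t+6) n)).powerset.filter (fun F => t + 4 ≤ (F ∩ s).card) := by
    rw [← hset]
  rw [hfil]
  have hxx : ∀ F ∈ ((s ∪ Finset.Ioc (t+6) n)).powerset.filter (fun F => t + 4 ≤ (F ∩ s).card),
      p ^ F.card * (1-p) ^ (n - F.card)
      = p ^ F.card * (1-p) ^ (s.card + (Finset.Ioc (t+6) n).card - F.card) := by
    intro F _; rw [hcard]
  rw [Finset.sum_congr rfl hxx, hk]
  -- split filter as union of powersetCards
  have hsplit : s.powerset.filter (fun C => t + 4 ≤ C.card)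
      = s.powersetCard (t+4) ∪ s.powersetCard (t+5) ∪ s.powersetCard (t+6) := by
    ext C
    simp only [Finset.mem_filter, Finset.mem_powerset, Finset.mem_union, Finset.mem_powersetCard]
    constructor
    · rintro ⟨h1, h2⟩
      have hcc := Finset.card_le_card h1
      rw [hscard] at hcc
      have hor : C.card = t+4 ∨ C.card = t+5 ∨ C.card = t+6 := by omega
      rcases hor with h'|h'|h'
      · exact Or.inl (Or.inl ⟨h1, h'⟩)
      · exact Or.inl (Or.inr ⟨h1, h'⟩)
      · exact Or.inr ⟨h1, h'⟩
    · rintro ((⟨h1, h2⟩|⟨h1,h2⟩)|⟨h1,h2⟩) <;> exact ⟨h1, by omega⟩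
  have hd1 : Disjoint (s.powersetCard (t+4)) (s.powersetCard (t+5)) := by
    apply Finset.disjoint_left.mpr; intro C hC1 hC2
    have := (Finset.mem_powersetCard.mp hC1).2
    have := (Finset.mem_powersetCard.mp hC2).2
    omega
  have hd2 : Disjoint (s.powersetCard (t+4) ∪ s.powersetCard (t+5)) (s.powersetCard (t+6)) := by
    apply Finset.disjoint_left.mpr; intro C hC1 hC2
    have := (Finset.mem_powersetCard.mp hC2).2
    rcases Finset.mem_union.mp hC1 with h' | h' <;>
      · have := (Finset.mem_powersetCard.mp h').2; omega
  rw [hsplit, Finset.sum_union hd2, Finset.sum_union hd1,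
    sum_pcard, sum_pcard, sum_pcard, hscard]
  have e1 : (t+6) - (t+4) = 2 := by omega
  have e2 : (t+6) - (t+5) = 1 := by omega
  have e3 : (t+6) - (t+6) = 0 := by omega
  have c1 : (t+6).choose (t+4) = (t+6).choose 2 := by
    have h24 : t+4 = t+6-2 := by omega
    rw [h24, Nat.choose_symm (by omega)]
  have c2 : (t+6).choose (t+5) = t+6 := by
    have h15 : t+5 = t+6-1 := by omega
    rw [h15, Nat.choose_symm (by omega), Nat.choose_one_right]
  have c3 : (t+6).choose (t+6) = 1 := Nat.choose_self _
  rw [e1, e2, e3, c1, c2, c3]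
  rw [pow_add p t 4, pow_add p t 5, pow_add p t 6]
  push_cast
  ring

lemma sqrt_facts (t : ℕ) (ht : 1 ≤ t) :
    0 < p0 t ∧ (t + 2 : ℝ) * p0 t ^ 2 = 1 + p0 t := by
  set s := Real.sqrt (4 * t + 9) with hs
  have hnn : (0:ℝ) ≤ 4 * t + 9 := by positivity
  have hs2 : s ^ 2 = 4 * t + 9 := Real.sq_sqrt hnn
  have hsnn : 0 ≤ s := Real.sqrt_nonneg _
  have ht' : (1:ℝ) ≤ t := by exact_mod_cast ht
  have hs3 : 3 < s := by nlinarith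
  have hne : s - 1 ≠ 0 := by nlinarith
  have hpos : 0 < p0 t := by
    rw [p0, ← hs]
    apply div_pos (by norm_num) (by linarith)
  refine ⟨hpos, ?_⟩
  rw [p0, ← hs]
  field_simp
  nlinarith [hs2]

lemma p0_lt_one (t : ℕ) (ht : 1 ≤ t) : p0 t < 1 := by
  obtain ⟨hpos, heq⟩ := sqrt_facts t ht
  have ht' : (1:ℝ) ≤ t := by exact_mod_cast ht
  nlinarith

lemma case_ge2 (t : ℕ) (ht : 2 ≤ t) (a : ℝ) (ha : 0 < a) (hab : a ≤ p0 t) :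
    (Nat.choose (t + 6) 2 : ℝ) * a ^ 4 * (1 - a) ^ 2
        + (t + 6 : ℝ) * a ^ 5 * (1 - a) + a ^ 6 ≤
    (Nat.choose (t + 6) 2 : ℝ) * p0 t ^ 4 * (1 - p0 t) ^ 2
        + (t + 6 : ℝ) * p0 t ^ 5 * (1 - p0 t) + p0 t ^ 6 := by
  obtain ⟨hbpos, heq⟩ := sqrt_facts t (by omega)
  set b := p0 t
  have ht' : (2:ℝ) ≤ t := by exact_mod_cast ht
  have hb23 : b ≤ 2/3 := by nlinarith
  have ha1 : a ≤ 2/3 := le_trans hab hb23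
  have h1 : a^2*(1-a) ≤ b^2*(1-b) := by
    have e : 0 ≤ (b-a)*((a+b) - (a^2+a*b+b^2)) := by
      apply mul_nonneg (by linarith)
      nlinarith [mul_nonneg ha.le (by linarith : (0:ℝ) ≤ 2/3 - a),
        mul_nonneg hbpos.le (by linarith : (0:ℝ) ≤ 2/3 - b),
        mul_nonneg ha.le (by linarith : (0:ℝ) ≤ 2/3 - b)]
    nlinarith [e]
  have h0a : 0 ≤ a^2*(1-a) := by nlinarith
  have h0b : 0 ≤ b^2*(1-b) := by nlinarith
  have key1 : a^4*(1-a)^2 ≤ b^4*(1-b)^2 := by nlinarith [mul_self_le_mul_self h0a h1]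
  have key2 : a^5*(1-a) ≤ b^5*(1-b) := by
    have h3 : a^3 ≤ b^3 := pow_le_pow_left₀ ha.le hab 3
    nlinarith [mul_le_mul h3 h1 h0a (by positivity : (0:ℝ) ≤ b^3)]
  have key3 : a^6 ≤ b^6 := pow_le_pow_left₀ ha.le hab 6
  have hC : (0:ℝ) ≤ (Nat.choose (t + 6) 2 : ℝ) := Nat.cast_nonneg _
  have hN : (0:ℝ) ≤ (t + 6 : ℝ) := by positivity
  nlinarith [mul_le_mul_of_nonneg_left key1 hC, mul_le_mul_of_nonneg_left key2 hN]

lemma deriv_f1 (x : ℝ) : deriv (fun x : ℝ => 21*x^4 - 35*x^5 + 15*x^6) x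
    = 84*x^3 - 175*x^4 + 90*x^5 := by
  have h : HasDerivAt (fun x : ℝ => 21*x^4 - 35*x^5 + 15*x^6)
      (21*(↑4*x^3) - 35*(↑5*x^4) + 15*(↑6*x^5)) x :=
    (((hasDerivAt_pow 4 x).const_mul 21).sub ((hasDerivAt_pow 5 x).const_mul 35)).add
      ((hasDerivAt_pow 6 x).const_mul 15)
  rw [h.deriv]; norm_num; ring

lemma case_t1 (a b : ℝ) (ha : 0 < a) (hab : a ≤ b) (hb : 3*b^2 = 1+b) (hbpos : 0 < b) :
    21*a^4*(1-a)^2 + 7*a^5*(1-a) + a^6 ≤ 21*b^4*(1-b)^2 + 7*b^5*(1-b) + b^6 := by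
  have hbc : b ≤ 114/145 := by nlinarith
  have hmono : MonotoneOn (fun x : ℝ => 21*x^4 - 35*x^5 + 15*x^6) (Set.Icc 0 b) := by
    apply monotoneOn_of_deriv_nonneg (convex_Icc 0 b)
    · exact Continuous.continuousOn (by continuity)
    · intro x _
      apply DifferentiableAt.differentiableWithinAt
      fun_prop
    · intro x hx
      rw [interior_Icc, Set.mem_Ioo] at hx
      rw [deriv_f1]
      nlinarith [hx.1, hx.2, pow_pos hx.1 3, sq_nonneg (x - 114/145), mul_nonneg (mul_nonneg hx.1.le hx.1.le) hx.1.le]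
  have h2 : 21*a^4 - 35*a^5 + 15*a^6 ≤ 21*b^4 - 35*b^5 + 15*b^6 :=
    hmono (Set.mem_Icc.mpr ⟨le_of_lt ha, hab⟩) (Set.mem_Icc.mpr ⟨le_of_lt hbpos, le_refl b⟩) hab
  nlinarith [h2]

theorem stmt_3 (n t : ℕ) (ht : 1 ≤ t) (hn : t + 6 ≤ n) :
    (∀ p : ℝ, 0 < p → p < 1 →
      mu p n (F2 n t) / mu p n (F0 n t) =
        (Nat.choose (t + 6) 2 : ℝ) * p ^ 4 * (1 - p) ^ 2
          + (t + 6 : ℝ) * p ^ 5 * (1 - p) + p ^ 6) ∧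
    (∀ p : ℝ, 0 < p → p ≤ p0 t →
      (Nat.choose (t + 6) 2 : ℝ) * p ^ 4 * (1 - p) ^ 2
          + (t + 6 : ℝ) * p ^ 5 * (1 - p) + p ^ 6 ≤
      (Nat.choose (t + 6) 2 : ℝ) * p0 t ^ 4 * (1 - p0 t) ^ 2
          + (t + 6 : ℝ) * p0 t ^ 5 * (1 - p0 t) + p0 t ^ 6) := by
  constructor
  · intro p hp _
    rw [mu_F2 p n t hn, mu_F0 p n t (by omega)]
    rw [mul_comm, mul_div_assoc, div_self (pow_ne_zero t (ne_of_gt hp)), mul_one]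
  · intro p hp hpb
    rcases Nat.lt_or_ge t 2 with h2 | h2
    · have ht1 : t = 1 := by omega
      subst ht1
      obtain ⟨hbpos, heq⟩ := sqrt_facts 1 le_rfl
      have heq' : 3 * p0 1 ^ 2 = 1 + p0 1 := by push_cast at heq; linarith
      have hkey := case_t1 p (p0 1) hp hpb heq' hbpos
      have e21 : ((1 + 6).choose 2 : ℝ) = 21 := by norm_num [Nat.choose]
      rw [e21]
      push_cast
      linarith [hkey]
    · exact case_ge2 t h2 p hp hpb
end

section
/- Let G ⊆ 2^{[n]} be (3,t)-maximal and H = σ_{i,j}(G). If H ⊆ F_1^t = {F : |F ∩ [t+3]| ≥ t+2}, then G is contained in some family isomorphic to F_1^t; consequently G ≅ F_1^t and H = F_1^t. -/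
open Finset

lemma iInter3_eq (f : Fin 3 → Finset ℕ) : (⋂ k, (f k : Set ℕ)) = ↑(f 0 ∩ f 1 ∩ f 2) := by
  ext x
  simp only [Set.mem_iInter, Finset.coe_inter, Set.mem_inter_iff, Finset.mem_coe]
  constructor
  · intro h; exact ⟨⟨h 0, h 1⟩, h 2⟩
  · rintro ⟨⟨h0, h1⟩, h2⟩ k
    fin_cases k <;> assumption

lemma ncard3 (f : Fin 3 → Finset ℕ) : (⋂ k, (f k : Set ℕ)).ncard = (f 0 ∩ f 1 ∩ f 2).card := by
  rw [iInter3_eq, Set.ncard_coe_finset]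

lemma rwise3 {t : ℕ} {G : Finset (Finset ℕ)} (h : RWise 3 t G) {C D E : Finset ℕ}
    (hC : C ∈ G) (hD : D ∈ G) (hE : E ∈ G) : t ≤ (C ∩ D ∩ E).card := by
  have h2 := h ![C, D, E] ?_
  · rw [ncard3] at h2; simpa using h2
  · intro k; fin_cases k <;> simpa

lemma inter3_card_ge (t : ℕ) (Q X Y Z : Finset ℕ) (hQ : Q.card = t+3)
    (hX : t+2 ≤ (X ∩ Q).card) (hY : t+2 ≤ (Y ∩ Q).card) (hZ : t+2 ≤ (Z ∩ Q).card) :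
    t ≤ (X ∩ Y ∩ Z).card := by
  have e1 := Finset.card_inter_add_card_sdiff Q X
  have e2 := Finset.card_inter_add_card_sdiff Q Y
  have e3 := Finset.card_inter_add_card_sdiff Q Z
  have e4 := Finset.card_inter_add_card_sdiff Q (X ∩ Y ∩ Z)
  rw [Finset.inter_comm] at hX hY hZ
  have hsub : Q \ (X ∩ Y ∩ Z) ⊆ (Q \ X) ∪ (Q \ Y) ∪ (Q \ Z) := by
    intro x hx
    simp only [Finset.mem_sdiff, Finset.mem_inter, Finset.mem_union] at hx ⊢
    tauto
  have h5 := Finset.card_le_card hsub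
  have h6 := Finset.card_union_le (Q \ X ∪ Q \ Y) (Q \ Z)
  have h7 := Finset.card_union_le (Q \ X) (Q \ Y)
  have h8 : (Q ∩ (X ∩ Y ∩ Z)).card ≤ (X ∩ Y ∩ Z).card :=
    Finset.card_le_card (Finset.inter_subset_right)
  omega

lemma max_witness {n t : ℕ} {G : Finset (Finset ℕ)} (hG : Max3 n t G) (hn : t ≤ n)
    {F : Finset ℕ} (hFn : F ⊆ Finset.Icc 1 n) (hFG : F ∉ G) :
    ∃ C ∈ G, ∃ D ∈ G, (F ∩ C ∩ D).card < t := by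
  have hne : ∃ X, X ∈ G := by
    by_contra h
    push_neg at h
    apply hG.2.2 (Finset.Icc 1 n) Finset.Subset.rfl (h _)
    intro f hf
    have hall : ∀ k, f k = Finset.Icc 1 n := by
      intro k
      rcases Finset.mem_insert.1 (hf k) with h1 | h1
      · exact h1
      · exact absurd h1 (h _)
    rw [ncard3, hall 0, hall 1, hall 2]
    simp only [Finset.inter_self]
    simpa using hn
  obtain ⟨X₀, hX₀⟩ := hne
  have hnR := hG.2.2 F hFn hFG
  rw [RWise] at hnR; push_neg at hnR
  obtain ⟨f, hmem, hlt⟩ := hnR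
  rw [ncard3] at hlt
  have h0 := Finset.mem_insert.1 (hmem 0)
  have h1 := Finset.mem_insert.1 (hmem 1)
  have h2 := Finset.mem_insert.1 (hmem 2)
  rcases h0 with e0 | m0 <;> rcases h1 with e1 | m1 <;> rcases h2 with e2 | m2
  · rw [e0, e1, e2] at hlt
    refine ⟨X₀, hX₀, X₀, hX₀, lt_of_le_of_lt (Finset.card_le_card ?_) hlt⟩
    intro x hx; simp only [Finset.mem_inter] at hx ⊢; tauto
  · rw [e0, e1] at hlt
    refine ⟨f 2, m2, f 2, m2, lt_of_le_of_lt (Finset.card_le_card ?_) hlt⟩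
    intro x hx; simp only [Finset.mem_inter] at hx ⊢; tauto
  · rw [e0, e2] at hlt
    refine ⟨f 1, m1, f 1, m1, lt_of_le_of_lt (Finset.card_le_card ?_) hlt⟩
    intro x hx; simp only [Finset.mem_inter] at hx ⊢; tauto
  · rw [e0] at hlt
    refine ⟨f 1, m1, f 2, m2, lt_of_le_of_lt (Finset.card_le_card ?_) hlt⟩
    intro x hx; simp only [Finset.mem_inter] at hx ⊢; tauto
  · rw [e1, e2] at hlt
    refine ⟨f 0, m0, f 0, m0, lt_of_le_of_lt (Finset.card_le_card ?_) hlt⟩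
    intro x hx; simp only [Finset.mem_inter] at hx ⊢; tauto
  · rw [e1] at hlt
    refine ⟨f 0, m0, f 2, m2, lt_of_le_of_lt (Finset.card_le_card ?_) hlt⟩
    intro x hx; simp only [Finset.mem_inter] at hx ⊢; tauto
  · rw [e2] at hlt
    refine ⟨f 0, m0, f 1, m1, lt_of_le_of_lt (Finset.card_le_card ?_) hlt⟩
    intro x hx; simp only [Finset.mem_inter] at hx ⊢; tauto
  · exact absurd (rwise3 hG.2.1 m0 m1 m2) (by omega)

lemma up_closed {n t : ℕ} {G : Finset (Finset ℕ)} (hG : Max3 n t G) (hn : t ≤ n)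
    {X Y : Finset ℕ} (hX : X ∈ G) (hXY : X ⊆ Y) (hY : Y ⊆ Finset.Icc 1 n) : Y ∈ G := by
  by_contra hYG
  obtain ⟨C, hC, D, hD, hlt⟩ := max_witness hG hn hY hYG
  have h1 := rwise3 hG.2.1 hX hC hD
  have hsub : X ∩ C ∩ D ⊆ Y ∩ C ∩ D := by
    intro x hx
    simp only [Finset.mem_inter] at hx ⊢
    exact ⟨⟨hXY hx.1.1, hx.1.2⟩, hx.2⟩
  have := Finset.card_le_card hsub
  omega

lemma union_singleton_eq_insert (X : Finset ℕ) (i : ℕ) : X ∪ {i} = insert i X := by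
  ext x; simp [or_comm]

lemma shiftSet_cond_facts {i j : ℕ} {G : Finset (Finset ℕ)} {X : Finset ℕ} (hXG : X ∈ G)
    (h : X ∩ {i, j} = {j} ∧ (X.erase j ∪ {i}) ∉ G) : j ∈ X ∧ i ∉ X ∧ i ≠ j := by
  have hjX : j ∈ X := by
    have : j ∈ X ∩ ({i, j} : Finset ℕ) := by rw [h.1]; simp
    exact (Finset.mem_inter.1 this).1
  have hiX : i ∉ X := by
    intro hiX
    have : i ∈ X ∩ ({i, j} : Finset ℕ) := Finset.mem_inter.2 ⟨hiX, by simp⟩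
    rw [h.1] at this
    simp only [Finset.mem_singleton] at this
    apply h.2
    have heq : X.erase j ∪ {i} = X := by
      rw [union_singleton_eq_insert, this, Finset.insert_erase hjX]
    rwa [heq]
  exact ⟨hjX, hiX, fun hij => hiX (hij ▸ hjX)⟩

lemma shiftSet_eq_self {i j : ℕ} {G : Finset (Finset ℕ)} {X : Finset ℕ}
    (hXG : X ∈ G) (h : i ∈ X ∨ j ∉ X) : shiftSet i j G X = X := by
  rw [shiftSet, if_neg]
  intro hc
  obtain ⟨hj, hi, _⟩ := shiftSet_cond_facts hXG hc
  tauto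

lemma shiftSet_mem {i j : ℕ} {G : Finset (Finset ℕ)} {X : Finset ℕ} (hXG : X ∈ G) :
    shiftSet i j G X ∈ shift i j G := Finset.mem_image_of_mem _ hXG

lemma shiftSet_injOn (i j : ℕ) (G : Finset (Finset ℕ)) :
    Set.InjOn (shiftSet i j G) ↑G := by
  intro X hX Y hY he
  simp only [Finset.mem_coe] at hX hY
  rw [shiftSet, shiftSet] at he
  by_cases cX : X ∩ {i, j} = {j} ∧ (X.erase j ∪ {i}) ∉ G <;>
    by_cases cY : Y ∩ {i, j} = {j} ∧ (Y.erase j ∪ {i}) ∉ G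
  · rw [if_pos cX, if_pos cY] at he
    obtain ⟨hjX, hiX, hij⟩ := shiftSet_cond_facts hX cX
    obtain ⟨hjY, hiY, _⟩ := shiftSet_cond_facts hY cY
    have hkey : ∀ Z : Finset ℕ, j ∈ Z → i ∉ Z → (Z.erase j ∪ {i}).erase i = Z.erase j := by
      intro Z hjZ hiZ
      ext x
      simp only [Finset.mem_erase, Finset.mem_union, Finset.mem_singleton]
      constructor
      · rintro ⟨hxi, hx | hx⟩
        · exact hx
        · exact absurd hx hxi
      · intro hx
        refine ⟨fun hxi => hiZ (hxi ▸ hx.2), Or.inl hx⟩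
    have he2 : X.erase j = Y.erase j := by
      rw [← hkey X hjX hiX, ← hkey Y hjY hiY, he]
    rw [← Finset.insert_erase hjX, ← Finset.insert_erase hjY, he2]
  · rw [if_pos cX, if_neg cY] at he
    exact absurd (he ▸ hY) cX.2
  · rw [if_neg cX, if_pos cY] at he
    exact absurd (he.symm ▸ hX) cY.2
  · rwa [if_neg cX, if_neg cY] at he

lemma shift_card (i j : ℕ) (G : Finset (Finset ℕ)) : (shift i j G).card = G.card :=
  Finset.card_image_of_injOn (shiftSet_injOn i j G)

lemma G_eq_filter {n t : ℕ} {G : Finset (Finset ℕ)} (hG : Max3 n t G) (hn : t ≤ n)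
    (Q : Finset ℕ) (hQc : Q.card = t+3) (hsub : ∀ X ∈ G, t+2 ≤ (X ∩ Q).card) :
    G = (Finset.Icc 1 n).powerset.filter (fun F => t+2 ≤ (F ∩ Q).card) := by
  ext X
  simp only [Finset.mem_filter, Finset.mem_powerset]
  constructor
  · intro hX
    exact ⟨hG.1 X hX, hsub X hX⟩
  · rintro ⟨hXn, hXQ⟩
    by_contra hXG
    obtain ⟨C, hC, D, hD, hlt⟩ := max_witness hG hn hXn hXG
    have := inter3_card_ge t Q X C D hQc hXQ (hsub C hC) (hsub D hD)
    omega

lemma mem_F1_iff {n t : ℕ} (X : Finset ℕ) :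
    X ∈ F1 n t ↔ X ⊆ Finset.Icc 1 n ∧ t+2 ≤ (X ∩ Finset.Icc 1 (t+3)).card := by
  simp [F1, Finset.mem_filter, Finset.mem_powerset]

lemma T1 {n t i j : ℕ} {G : Finset (Finset ℕ)} (hH : shift i j G ⊆ F1 n t) {X : Finset ℕ}
    (hX : X ∈ G) (h : i ∈ X ∨ j ∉ X) : t+2 ≤ (X ∩ Finset.Icc 1 (t+3)).card := by
  have := hH (shiftSet_mem hX)
  rw [shiftSet_eq_self hX h] at this
  exact ((mem_F1_iff X).1 this).2

lemma U1 {n t i j : ℕ} {G : Finset (Finset ℕ)} (hH : shift i j G ⊆ F1 n t)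
    (hiP : i ∈ Finset.Icc 1 (t+3)) (hjP : j ∉ Finset.Icc 1 (t+3))
    {X : Finset ℕ} (hX : X ∈ G) (hXc : ¬ (t+2 ≤ (X ∩ Finset.Icc 1 (t+3)).card)) :
    j ∈ X ∧ i ∉ X ∧ (X.erase j ∪ {i}) ∉ G ∧ (X ∩ Finset.Icc 1 (t+3)).card = t+1 := by
  by_cases hc : X ∩ {i, j} = {j} ∧ (X.erase j ∪ {i}) ∉ G
  · obtain ⟨hjX, hiX, hij⟩ := shiftSet_cond_facts hX hc
    have hmem := hH (shiftSet_mem (i := i) (j := j) hX)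
    rw [shiftSet, if_pos hc] at hmem
    have hcard := ((mem_F1_iff _).1 hmem).2
    have he : (X.erase j ∪ {i}) ∩ Finset.Icc 1 (t+3) = insert i (X ∩ Finset.Icc 1 (t+3)) := by
      ext x
      simp only [Finset.mem_inter, Finset.mem_union, Finset.mem_erase, Finset.mem_singleton,
        Finset.mem_insert]
      constructor
      · rintro ⟨hx | rfl, hxP⟩
        · exact Or.inr ⟨hx.2, hxP⟩
        · exact Or.inl rfl
      · rintro (rfl | ⟨hx, hxP⟩)
        · exact ⟨Or.inr rfl, hiP⟩
        · exact ⟨Or.inl ⟨fun h => hjP (h ▸ hxP), hx⟩, hxP⟩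
    rw [he, Finset.card_insert_of_notMem (fun h => hiX (Finset.mem_inter.1 h).1)] at hcard
    exact ⟨hjX, hiX, hc.2, by omega⟩
  · have := hH (shiftSet_mem (i := i) (j := j) hX)
    rw [shiftSet, if_neg hc] at this
    exact absurd ((mem_F1_iff X).1 this).2 hXc

lemma comp_set {n i j y : ℕ} (hiIc : i ∈ Finset.Icc 1 n) (hyi : y ≠ i) (hji : j ≠ i) :
    ((Finset.Icc 1 n \ {i, y}).erase j) ∪ {i} = Finset.Icc 1 n \ {y, j} := by
  ext x
  by_cases hxi : x = i
  · simp [hxi, hiIc, Ne.symm hyi, Ne.symm hji]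
  · simp only [Finset.mem_union, Finset.mem_erase, Finset.mem_sdiff, Finset.mem_insert,
      Finset.mem_singleton, hxi, or_false]
    tauto

lemma sdiff_inter_inter {n u v : ℕ} {C D : Finset ℕ} (hC : C ⊆ Finset.Icc 1 n) :
    (Finset.Icc 1 n \ {u, v}) ∩ C ∩ D = (C ∩ D) \ {u, v} := by
  ext x
  simp only [Finset.mem_inter, Finset.mem_sdiff, Finset.mem_insert, Finset.mem_singleton]
  constructor
  · rintro ⟨⟨⟨h1, h2⟩, h3⟩, h4⟩
    exact ⟨⟨h3, h4⟩, h2⟩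
  · rintro ⟨⟨h3, h4⟩, h2⟩
    exact ⟨⟨⟨hC h3, h2⟩, h3⟩, h4⟩

lemma witness_struct {n t : ℕ} {G : Finset (Finset ℕ)} (hG : Max3 n t G) (htn : t ≤ n)
    {u v w z : ℕ} (huv : u ≠ v) (hwu : w ≠ u) (hwv : w ≠ v) (hzv : z ≠ v) (hzu : z ≠ u)
    (hN : Finset.Icc 1 n \ {u, v} ∉ G)
    (hM1 : Finset.Icc 1 n \ {v, z} ∈ G) (hM2 : Finset.Icc 1 n \ {w, u} ∈ G) :
    ∃ C ∈ G, ∃ D ∈ G, w ∉ C ∧ u ∈ C ∩ D ∧ v ∈ C ∩ D ∧ w ∉ C ∩ D ∧ z ∉ C ∩ D ∧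
      (C ∩ D).card = t + 1 := by
  obtain ⟨C₀, hC₀, D₀, hD₀, hlt⟩ := max_witness hG htn Finset.sdiff_subset hN
  rw [sdiff_inter_inter (hG.1 C₀ hC₀)] at hlt
  have h1 : t ≤ ((C₀ ∩ D₀) \ {w, u}).card := by
    have hr := rwise3 hG.2.1 hM2 hC₀ hD₀
    rwa [sdiff_inter_inter (hG.1 C₀ hC₀)] at hr
  have h2 : t ≤ ((C₀ ∩ D₀) \ {v, z}).card := by
    have hr := rwise3 hG.2.1 hM1 hC₀ hD₀
    rwa [sdiff_inter_inter (hG.1 C₀ hC₀)] at hr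
  set S := C₀ ∩ D₀ with hSdef
  have hvS : v ∈ S := by
    by_contra hv
    have hsub : S \ {w, u} ⊆ S \ {u, v} := by
      intro x hx
      simp only [Finset.mem_sdiff, Finset.mem_insert, Finset.mem_singleton] at hx ⊢
      refine ⟨hx.1, ?_⟩
      rintro (rfl | rfl)
      · exact hx.2 (Or.inr rfl)
      · exact hv hx.1
    have := Finset.card_le_card hsub
    omega
  have hwS : w ∉ S := by
    intro hw
    have hsub : (S \ {w, u}).erase v ∪ {w} ⊆ S \ {u, v} := by
      intro x hx
      simp only [Finset.mem_union, Finset.mem_erase, Finset.mem_sdiff, Finset.mem_insert,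
        Finset.mem_singleton] at hx ⊢
      rcases hx with ⟨hxv, hxS, hx⟩ | rfl
      · push_neg at hx
        exact ⟨hxS, by rintro (rfl | rfl); exacts [hx.2 rfl, hxv rfl]⟩
      · exact ⟨hw, by rintro (rfl | rfl); exacts [hwu rfl, hwv rfl]⟩
    have hc1 := Finset.card_le_card hsub
    have hvmem : v ∈ S \ {w, u} := by
      simp only [Finset.mem_sdiff, Finset.mem_insert, Finset.mem_singleton]
      exact ⟨hvS, by rintro (rfl | rfl); exacts [hwv rfl, huv rfl]⟩
    have hwnot : w ∉ (S \ {w, u}).erase v := by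
      simp
    rw [Finset.card_union_of_disjoint (Finset.disjoint_singleton_right.2 hwnot),
      Finset.card_erase_of_mem hvmem, Finset.card_singleton] at hc1
    omega
  have huS : u ∈ S := by
    by_contra hu
    have hsub : S \ {v, z} ⊆ S \ {u, v} := by
      intro x hx
      simp only [Finset.mem_sdiff, Finset.mem_insert, Finset.mem_singleton] at hx ⊢
      refine ⟨hx.1, ?_⟩
      rintro (rfl | rfl)
      · exact hu hx.1
      · exact hx.2 (Or.inl rfl)
    have := Finset.card_le_card hsub
    omega
  have hzS : z ∉ S := by
    intro hz
    have hsub : (S \ {v, z}).erase u ∪ {z} ⊆ S \ {u, v} := by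
      intro x hx
      simp only [Finset.mem_union, Finset.mem_erase, Finset.mem_sdiff, Finset.mem_insert,
        Finset.mem_singleton] at hx ⊢
      rcases hx with ⟨hxu, hxS, hx⟩ | rfl
      · push_neg at hx
        exact ⟨hxS, by rintro (rfl | rfl); exacts [hxu rfl, hx.1 rfl]⟩
      · exact ⟨hz, by rintro (rfl | rfl); exacts [hzu rfl, hzv rfl]⟩
    have hc1 := Finset.card_le_card hsub
    have humem : u ∈ S \ {v, z} := by
      simp only [Finset.mem_sdiff, Finset.mem_insert, Finset.mem_singleton]
      exact ⟨huS, by rintro (rfl | rfl); exacts [huv rfl, hzu rfl]⟩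
    have hznot : z ∉ (S \ {v, z}).erase u := by
      simp
    rw [Finset.card_union_of_disjoint (Finset.disjoint_singleton_right.2 hznot),
      Finset.card_erase_of_mem humem, Finset.card_singleton] at hc1
    omega
  have hcard : S.card = t + 1 := by
    have hub : S.card ≤ (S \ {u, v}).card + ({u, v} : Finset ℕ).card :=
      Finset.card_le_card_sdiff_add_card
    rw [Finset.card_pair huv] at hub
    have hlb : (S \ {v, z}) ∪ {v} ⊆ S := by
      intro x hx
      rcases Finset.mem_union.1 hx with h | h
      · exact (Finset.mem_sdiff.1 h).1
      · rw [Finset.mem_singleton.1 h]; exact hvS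
    have hvnot : v ∉ S \ {v, z} := by simp
    have hc2 := Finset.card_le_card hlb
    rw [Finset.card_union_of_disjoint (Finset.disjoint_singleton_right.2 hvnot),
      Finset.card_singleton] at hc2
    omega
  have hw0 : w ∉ C₀ ∨ w ∉ D₀ := by
    by_contra h
    push_neg at h
    exact hwS (Finset.mem_inter.2 ⟨h.1, h.2⟩)
  rcases hw0 with hw0 | hw0
  · exact ⟨C₀, hC₀, D₀, hD₀, hw0, huS, hvS, hwS, hzS, hcard⟩
  · refine ⟨D₀, hD₀, C₀, hC₀, hw0, ?_, ?_, ?_, ?_, ?_⟩ <;>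
      rw [Finset.inter_comm D₀ C₀] <;> assumption

lemma main_case {n t i j : ℕ} {G : Finset (Finset ℕ)} (hn : t + 4 ≤ n) (ht : 1 ≤ t)
    (hG : Max3 n t G) (hH : shift i j G ⊆ F1 n t)
    (hiP : i ∈ Finset.Icc 1 (t+3)) (hjP : j ∉ Finset.Icc 1 (t+3))
    (hA0 : ∃ X ∈ G, ¬ (t+2 ≤ (X ∩ Finset.Icc 1 (t+3)).card))
    (hB0 : ∃ X ∈ G, ¬ (t+2 ≤ (X ∩ insert j ((Finset.Icc 1 (t+3)).erase i)).card)) :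
    False := by
  have htn : t ≤ n := by omega
  have hPc : (Finset.Icc 1 (t+3)).card = t+3 := by simp
  have hPIc : Finset.Icc 1 (t+3) ⊆ Finset.Icc 1 n := Finset.Icc_subset_Icc le_rfl (by omega)
  have hiIc : i ∈ Finset.Icc 1 n := hPIc hiP
  have hij : i ≠ j := fun h => hjP (h ▸ hiP)
  have hji : j ≠ i := hij.symm
  -- A side
  obtain ⟨X₀, hX₀G, hX₀c⟩ := hA0
  obtain ⟨hjX₀, hiX₀, -, hX₀card⟩ := U1 hH hiP hjP hX₀G hX₀c
  have hPX₀ : (Finset.Icc 1 (t+3) \ X₀).card = 2 := by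
    have h := Finset.card_inter_add_card_sdiff (Finset.Icc 1 (t+3)) X₀
    rw [Finset.inter_comm] at h
    omega
  have hiPX₀ : i ∈ Finset.Icc 1 (t+3) \ X₀ := Finset.mem_sdiff.2 ⟨hiP, hiX₀⟩
  have hane : ((Finset.Icc 1 (t+3) \ X₀).erase i).Nonempty := by
    rw [← Finset.card_pos, Finset.card_erase_of_mem hiPX₀]
    omega
  obtain ⟨a, ha⟩ := hane
  rw [Finset.mem_erase, Finset.mem_sdiff] at ha
  obtain ⟨hai, haP, haX₀⟩ := ha
  have hcardfun : ∀ y, y ∈ Finset.Icc 1 (t+3) → y ≠ i →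
      ((Finset.Icc 1 n \ {i, y}) ∩ Finset.Icc 1 (t+3)).card = t+1 := by
    intro y hyP hyi
    have h1 : (Finset.Icc 1 n \ {i, y}) ∩ Finset.Icc 1 (t+3) =
        Finset.Icc 1 (t+3) \ {i, y} := by
      ext x
      simp only [Finset.mem_inter, Finset.mem_sdiff, Finset.mem_insert, Finset.mem_singleton]
      exact ⟨fun h => ⟨h.2, h.1.2⟩, fun h => ⟨⟨hPIc h.1, h.2⟩, h.1⟩⟩
    have hsub2 : ({i, y} : Finset ℕ) ⊆ Finset.Icc 1 (t+3) := by
      intro x hx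
      simp only [Finset.mem_insert, Finset.mem_singleton] at hx
      rcases hx with rfl | rfl
      exacts [hiP, hyP]
    rw [h1, Finset.card_sdiff_of_subset hsub2, hPc, Finset.card_pair (Ne.symm hyi)]
    omega
  have hAG : Finset.Icc 1 n \ {i, a} ∈ G := by
    apply up_closed hG htn hX₀G _ Finset.sdiff_subset
    intro x hx
    simp only [Finset.mem_sdiff, Finset.mem_insert, Finset.mem_singleton]
    refine ⟨hG.1 X₀ hX₀G hx, ?_⟩
    rintro (rfl | rfl)
    exacts [hiX₀ hx, haX₀ hx]
  have hN1 : Finset.Icc 1 n \ {a, j} ∉ G := by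
    obtain ⟨-, -, hmoved, -⟩ := U1 hH hiP hjP hAG (by rw [hcardfun a haP hai]; omega)
    rwa [comp_set hiIc hai hji] at hmoved
  -- B side
  obtain ⟨Y₀, hY₀G, hY₀c⟩ := hB0
  have hY₀P : t+2 ≤ (Y₀ ∩ Finset.Icc 1 (t+3)).card := by
    by_contra hc
    obtain ⟨hjY, hiY, -, hYcard⟩ := U1 hH hiP hjP hY₀G hc
    apply hY₀c
    have he : Y₀ ∩ insert j ((Finset.Icc 1 (t+3)).erase i) =
        insert j (Y₀ ∩ Finset.Icc 1 (t+3)) := by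
      ext x
      simp only [Finset.mem_inter, Finset.mem_insert, Finset.mem_erase]
      constructor
      · rintro ⟨hxY, rfl | ⟨hxi, hxP⟩⟩
        · exact Or.inl rfl
        · exact Or.inr ⟨hxY, hxP⟩
      · rintro (rfl | ⟨hxY, hxP⟩)
        · exact ⟨hjY, Or.inl rfl⟩
        · exact ⟨hxY, Or.inr ⟨fun h => hiY (h ▸ hxY), hxP⟩⟩
    rw [he, Finset.card_insert_of_notMem (fun h => hjP (Finset.mem_inter.1 h).2)]
    omega
  have hiY₀ : i ∈ Y₀ := by
    by_contra hiY
    apply hY₀c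
    refine le_trans hY₀P (Finset.card_le_card ?_)
    intro x hx
    rw [Finset.mem_inter] at hx
    refine Finset.mem_inter.2 ⟨hx.1, Finset.mem_insert_of_mem (Finset.mem_erase.2 ⟨?_, hx.2⟩)⟩
    exact fun h => hiY (h ▸ hx.1)
  have hsub1 : (Y₀ ∩ Finset.Icc 1 (t+3)).erase i ⊆
      Y₀ ∩ insert j ((Finset.Icc 1 (t+3)).erase i) := by
    intro x hx
    rw [Finset.mem_erase, Finset.mem_inter] at hx
    exact Finset.mem_inter.2 ⟨hx.2.1,
      Finset.mem_insert_of_mem (Finset.mem_erase.2 ⟨hx.1, hx.2.2⟩)⟩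
  have hjY₀ : j ∉ Y₀ := by
    intro hjY
    apply hY₀c
    have hsub2 : insert j ((Y₀ ∩ Finset.Icc 1 (t+3)).erase i) ⊆
        Y₀ ∩ insert j ((Finset.Icc 1 (t+3)).erase i) := by
      intro x hx
      rcases Finset.mem_insert.1 hx with rfl | hx
      · exact Finset.mem_inter.2 ⟨hjY, Finset.mem_insert_self _ _⟩
      · exact hsub1 hx
    have hcc := Finset.card_le_card hsub2
    rw [Finset.card_insert_of_notMem (fun h => hjP (Finset.mem_inter.1 (Finset.mem_erase.1 h).2).2),
      Finset.card_erase_of_mem (Finset.mem_inter.2 ⟨hiY₀, hiP⟩)] at hcc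
    omega
  have hY₀Pub : (Y₀ ∩ Finset.Icc 1 (t+3)).card ≤ t+2 := by
    have h1 := Finset.card_le_card hsub1
    rw [Finset.card_erase_of_mem (Finset.mem_inter.2 ⟨hiY₀, hiP⟩)] at h1
    omega
  have hbex : (Finset.Icc 1 (t+3) \ Y₀).Nonempty := by
    rw [← Finset.card_pos]
    have h := Finset.card_inter_add_card_sdiff (Finset.Icc 1 (t+3)) Y₀
    rw [Finset.inter_comm] at h
    omega
  obtain ⟨b, hb⟩ := hbex
  rw [Finset.mem_sdiff] at hb
  have hbi : b ≠ i := fun h => hb.2 (h ▸ hiY₀)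
  have hbj : b ≠ j := fun h => hjP (h ▸ hb.1)
  have hBG : Finset.Icc 1 n \ {j, b} ∈ G := by
    apply up_closed hG htn hY₀G _ Finset.sdiff_subset
    intro x hx
    simp only [Finset.mem_sdiff, Finset.mem_insert, Finset.mem_singleton]
    refine ⟨hG.1 Y₀ hY₀G hx, ?_⟩
    rintro (rfl | rfl)
    exacts [hjY₀ hx, hb.2 hx]
  have hab : a ≠ b := by
    intro h
    apply hN1
    have hpair : ({a, j} : Finset ℕ) = {j, b} := by
      subst h
      exact Finset.pair_comm a j
    rw [hpair]
    exact hBG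
  have hN2 : Finset.Icc 1 n \ {i, b} ∉ G := by
    intro hmem
    obtain ⟨-, -, hmoved, -⟩ := U1 hH hiP hjP hmem (by rw [hcardfun b hb.1 hbi]; omega)
    rw [comp_set hiIc hbi hji] at hmoved
    rw [Finset.pair_comm b j] at hmoved
    exact hmoved hBG
  have haj : a ≠ j := fun h => hjP (h ▸ haP)
  -- Delta
  set Δ := ((Finset.Icc 1 (t+3)).erase i).filter
    (fun y => (Finset.Icc 1 n \ {i, y}) ∈ G) with hΔdef
  have hΔsub : Δ ⊆ (Finset.Icc 1 (t+3)).erase i := Finset.filter_subset _ _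
  have haΔ : a ∈ Δ := by
    rw [hΔdef, Finset.mem_filter, Finset.mem_erase]
    exact ⟨⟨hai, haP⟩, hAG⟩
  have hbΔ : b ∉ Δ := by
    rw [hΔdef, Finset.mem_filter]
    rintro ⟨-, h⟩
    exact hN2 h
  have rule1 : ∀ y ∈ Δ, ∀ X ∈ G, j ∈ X ∨ y ∈ X := by
    intro y hy X hX
    by_contra hcon
    push_neg at hcon
    rw [hΔdef, Finset.mem_filter, Finset.mem_erase] at hy
    obtain ⟨⟨hyi, hyP⟩, hyG⟩ := hy
    obtain ⟨-, -, hmoved, -⟩ := U1 hH hiP hjP hyG (by rw [hcardfun y hyP hyi]; omega)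
    rw [comp_set hiIc hyi hji] at hmoved
    apply hmoved
    apply up_closed hG htn hX _ Finset.sdiff_subset
    intro x hx
    simp only [Finset.mem_sdiff, Finset.mem_insert, Finset.mem_singleton]
    refine ⟨hG.1 X hX hx, ?_⟩
    rintro (rfl | rfl)
    exacts [hcon.2 hx, hcon.1 hx]
  have rule2 : ∀ y ∈ (Finset.Icc 1 (t+3)).erase i, y ∉ Δ → ∀ X ∈ G, i ∈ X ∨ y ∈ X := by
    intro y hyEr hyΔ X hX
    by_contra hcon
    push_neg at hcon
    apply hyΔ
    rw [hΔdef, Finset.mem_filter]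
    refine ⟨hyEr, ?_⟩
    apply up_closed hG htn hX _ Finset.sdiff_subset
    intro x hx
    simp only [Finset.mem_sdiff, Finset.mem_insert, Finset.mem_singleton]
    refine ⟨hG.1 X hX hx, ?_⟩
    rintro (rfl | rfl)
    exacts [hcon.1 hx, hcon.2 hx]
  -- witnesses
  obtain ⟨C, hC, D, hD, hiC, haS, hjS, hiS, hbS, hScard⟩ :=
    witness_struct hG htn haj (Ne.symm hai) hij hbj (Ne.symm hab) hN1 hBG hAG
  obtain ⟨C₂, hC₂, D₂, hD₂, hjC₂, hbS₂, hiS₂, hjS₂, haS₂, hS₂card⟩ :=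
    witness_struct hG htn hbi (Ne.symm hbj) hji hai hab
      (by rwa [Finset.pair_comm b i]) hAG hBG
  have hkey1 : (C₂ ∩ D₂).erase i ⊆ C := by
    have hr := rwise3 hG.2.1 hC hC₂ hD₂
    rw [Finset.inter_assoc] at hr
    have hsub : C ∩ (C₂ ∩ D₂) ⊆ (C₂ ∩ D₂).erase i := by
      intro x hx
      rw [Finset.mem_inter] at hx
      exact Finset.mem_erase.2 ⟨fun h => hiC (h ▸ hx.1), hx.2⟩
    have hcard2 : ((C₂ ∩ D₂).erase i).card = t + 1 - 1 := by
      rw [Finset.card_erase_of_mem hiS₂, hS₂card]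
    have heq := Finset.eq_of_subset_of_card_le hsub (by omega)
    intro x hx
    rw [← heq] at hx
    exact (Finset.mem_inter.1 hx).1
  have hbC : b ∈ C := hkey1 (Finset.mem_erase.2 ⟨hbi, hbS₂⟩)
  have hbD : b ∉ D := fun h => hbS (Finset.mem_inter.2 ⟨hbC, h⟩)
  have hkey2 : (C₂ ∩ D₂).erase b ⊆ D := by
    have hr := rwise3 hG.2.1 hD hC₂ hD₂
    rw [Finset.inter_assoc] at hr
    have hsub : D ∩ (C₂ ∩ D₂) ⊆ (C₂ ∩ D₂).erase b := by
      intro x hx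
      rw [Finset.mem_inter] at hx
      exact Finset.mem_erase.2 ⟨fun h => hbD (h ▸ hx.1), hx.2⟩
    have hcard2 : ((C₂ ∩ D₂).erase b).card = t + 1 - 1 := by
      rw [Finset.card_erase_of_mem hbS₂, hS₂card]
    have heq := Finset.eq_of_subset_of_card_le hsub (by omega)
    intro x hx
    rw [← heq] at hx
    exact (Finset.mem_inter.1 hx).1
  have hiD : i ∈ D := hkey2 (Finset.mem_erase.2 ⟨Ne.symm hbi, hiS₂⟩)
  have hTcard : ((C ∩ D) \ {a, j}).card = t + 1 - 2 := by
    rw [Finset.card_sdiff_of_subset, hScard, Finset.card_pair haj]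
    intro x hx
    simp only [Finset.mem_insert, Finset.mem_singleton] at hx
    rcases hx with rfl | rfl
    exacts [haS, hjS]
  have hT₂T : (C₂ ∩ D₂) \ {i, b} ⊆ (C ∩ D) \ {a, j} := by
    intro x hx
    simp only [Finset.mem_sdiff, Finset.mem_insert, Finset.mem_singleton] at hx
    push_neg at hx
    have hxC : x ∈ C := hkey1 (Finset.mem_erase.2 ⟨hx.2.1, hx.1⟩)
    have hxD : x ∈ D := hkey2 (Finset.mem_erase.2 ⟨hx.2.2, hx.1⟩)
    simp only [Finset.mem_sdiff, Finset.mem_inter, Finset.mem_insert, Finset.mem_singleton]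
    refine ⟨⟨hxC, hxD⟩, ?_⟩
    rintro (rfl | rfl)
    exacts [haS₂ hx.1, hjS₂ hx.1]
  have hT₂card : ((C₂ ∩ D₂) \ {i, b}).card = t + 1 - 2 := by
    rw [Finset.card_sdiff_of_subset, hS₂card, Finset.card_pair (Ne.symm hbi)]
    intro x hx
    simp only [Finset.mem_insert, Finset.mem_singleton] at hx
    rcases hx with rfl | rfl
    exacts [hiS₂, hbS₂]
  have hT₂eq : (C₂ ∩ D₂) \ {i, b} = (C ∩ D) \ {a, j} :=
    Finset.eq_of_subset_of_card_le hT₂T (by omega)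
  -- counting
  have hDP : t+2 ≤ (D ∩ Finset.Icc 1 (t+3)).card := T1 hH hD (Or.inl hiD)
  have hiD₂ : i ∈ D₂ := (Finset.mem_inter.1 hiS₂).2
  have hD₂P : t+2 ≤ (D₂ ∩ Finset.Icc 1 (t+3)).card := T1 hH hD₂ (Or.inl hiD₂)
  set T := (C ∩ D) \ {a, j} with hTdef
  set Δc := ((Finset.Icc 1 (t+3)).erase i) \ Δ with hΔcdef
  have hcount1 : D ∩ Finset.Icc 1 (t+3) ⊆ insert i (Δ ∪ (T ∩ Δc)) := by
    intro x hx
    rw [Finset.mem_inter] at hx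
    rw [Finset.mem_insert]
    by_cases hxi : x = i
    · exact Or.inl hxi
    · right
      rw [Finset.mem_union]
      have hxEr : x ∈ (Finset.Icc 1 (t+3)).erase i := Finset.mem_erase.2 ⟨hxi, hx.2⟩
      by_cases hxΔ : x ∈ Δ
      · exact Or.inl hxΔ
      · right
        have hxC : x ∈ C := (rule2 x hxEr hxΔ C hC).resolve_left hiC
        refine Finset.mem_inter.2 ⟨?_, by rw [hΔcdef]; exact Finset.mem_sdiff.2 ⟨hxEr, hxΔ⟩⟩
        rw [hTdef]
        simp only [Finset.mem_sdiff, Finset.mem_inter, Finset.mem_insert, Finset.mem_singleton]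
        refine ⟨⟨hxC, hx.1⟩, ?_⟩
        rintro (rfl | rfl)
        exacts [hxΔ haΔ, hjP hx.2]
  have hcount2 : D₂ ∩ Finset.Icc 1 (t+3) ⊆ insert i (Δc ∪ (T ∩ Δ)) := by
    intro x hx
    rw [Finset.mem_inter] at hx
    rw [Finset.mem_insert]
    by_cases hxi : x = i
    · exact Or.inl hxi
    · right
      rw [Finset.mem_union]
      have hxEr : x ∈ (Finset.Icc 1 (t+3)).erase i := Finset.mem_erase.2 ⟨hxi, hx.2⟩
      by_cases hxΔ : x ∈ Δ
      · right
        have hxC₂ : x ∈ C₂ := (rule1 x hxΔ C₂ hC₂).resolve_left hjC₂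
        have hxS₂ : x ∈ (C₂ ∩ D₂) \ {i, b} := by
          simp only [Finset.mem_sdiff, Finset.mem_inter, Finset.mem_insert, Finset.mem_singleton]
          refine ⟨⟨hxC₂, hx.1⟩, ?_⟩
          rintro (rfl | rfl)
          exacts [hxi rfl, hbΔ hxΔ]
        rw [hT₂eq] at hxS₂
        exact Finset.mem_inter.2 ⟨hxS₂, hxΔ⟩
      · exact Or.inl (by rw [hΔcdef]; exact Finset.mem_sdiff.2 ⟨hxEr, hxΔ⟩)
  have hc1 : t+2 ≤ 1 + Δ.card + (T ∩ Δc).card := by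
    have h1 := Finset.card_le_card hcount1
    have h2 := Finset.card_insert_le i (Δ ∪ (T ∩ Δc))
    have h3 := Finset.card_union_le Δ (T ∩ Δc)
    omega
  have hc2 : t+2 ≤ 1 + Δc.card + (T ∩ Δ).card := by
    have h1 := Finset.card_le_card hcount2
    have h2 := Finset.card_insert_le i (Δc ∪ (T ∩ Δ))
    have h3 := Finset.card_union_le Δc (T ∩ Δ)
    omega
  have hdisj : Disjoint (T ∩ Δ) (T ∩ Δc) := by
    rw [Finset.disjoint_left]
    intro x hx1 hx2
    rw [hΔcdef] at hx2
    exact (Finset.mem_sdiff.1 (Finset.mem_inter.1 hx2).2).2 (Finset.mem_inter.1 hx1).2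
  have hsum : (T ∩ Δ).card + (T ∩ Δc).card ≤ T.card := by
    rw [← Finset.card_union_of_disjoint hdisj]
    apply Finset.card_le_card
    intro x hx
    rcases Finset.mem_union.1 hx with h | h
    exacts [(Finset.mem_inter.1 h).1, (Finset.mem_inter.1 h).1]
  have hEr : ((Finset.Icc 1 (t+3)).erase i).card = t + 3 - 1 := by
    rw [Finset.card_erase_of_mem hiP, hPc]
  have hΔub := Finset.card_le_card hΔsub
  have hΔlb : 1 ≤ Δ.card := Finset.card_pos.2 ⟨a, haΔ⟩
  have hΔceq : Δc.card = ((Finset.Icc 1 (t+3)).erase i).card - Δ.card := by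
    rw [hΔcdef, Finset.card_sdiff_of_subset hΔsub]
  omega

lemma t0_case {n i j : ℕ} {G : Finset (Finset ℕ)} (hG : Max3 n 0 G)
    (hH : shift i j G ⊆ F1 n 0) : False := by
  have hempty : (∅ : Finset ℕ) ∈ G := by
    by_contra h
    apply hG.2.2 ∅ (Finset.empty_subset _) h
    intro f hf
    exact Nat.zero_le _
  have hmem := hH (shiftSet_mem (i := i) (j := j) hempty)
  rw [shiftSet_eq_self hempty (Or.inr (Finset.notMem_empty j))] at hmem
  have := ((mem_F1_iff _).1 hmem).2
  simp at this

lemma swap_pres_Icc {n i j : ℕ} (hiIc : i ∈ Finset.Icc 1 n) (hjIc : j ∈ Finset.Icc 1 n) :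
    ∀ x, x ∈ Finset.Icc 1 n ↔ (Equiv.swap i j) x ∈ Finset.Icc 1 n := by
  intro x
  by_cases hxi : x = i
  · subst hxi; rw [Equiv.swap_apply_left]; exact ⟨fun _ => hjIc, fun _ => hiIc⟩
  by_cases hxj : x = j
  · subst hxj; rw [Equiv.swap_apply_right]; exact ⟨fun _ => hiIc, fun _ => hjIc⟩
  · rw [Equiv.swap_apply_of_ne_of_ne hxi hxj]

lemma image_swap_swap (i j : ℕ) (F : Finset ℕ) :
    (F.image (Equiv.swap i j)).image (Equiv.swap i j) = F := by
  rw [Finset.image_image]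
  simp [Function.comp_def, Equiv.swap_apply_self]

lemma swap_image_P {t i j : ℕ} (hiP : i ∈ Finset.Icc 1 (t+3)) (hjP : j ∉ Finset.Icc 1 (t+3)) :
    (Finset.Icc 1 (t+3)).image (Equiv.swap i j) = insert j ((Finset.Icc 1 (t+3)).erase i) := by
  ext y
  simp only [Finset.mem_image, Finset.mem_insert, Finset.mem_erase]
  constructor
  · rintro ⟨x, hx, rfl⟩
    by_cases hxi : x = i
    · subst hxi; rw [Equiv.swap_apply_left]; exact Or.inl rfl
    · have hxj : x ≠ j := fun h => hjP (h ▸ hx)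
      rw [Equiv.swap_apply_of_ne_of_ne hxi hxj]
      exact Or.inr ⟨hxi, hx⟩
  · rintro (rfl | ⟨hyi, hyP⟩)
    · exact ⟨i, hiP, Equiv.swap_apply_left _ _⟩
    · exact ⟨y, hyP, Equiv.swap_apply_of_ne_of_ne hyi (fun h => hjP (h ▸ hyP))⟩

lemma FQ_eq_image {n t i j : ℕ} (hiP : i ∈ Finset.Icc 1 (t+3)) (hjP : j ∉ Finset.Icc 1 (t+3))
    (hiIc : i ∈ Finset.Icc 1 n) (hjIc : j ∈ Finset.Icc 1 n) :
    (Finset.Icc 1 n).powerset.filter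
        (fun F => t+2 ≤ (F ∩ insert j ((Finset.Icc 1 (t+3)).erase i)).card) =
      (F1 n t).image (fun A => A.image (Equiv.swap i j)) := by
  have hQ : (Finset.Icc 1 (t+3)).image (Equiv.swap i j) =
      insert j ((Finset.Icc 1 (t+3)).erase i) := swap_image_P hiP hjP
  have hP : (insert j ((Finset.Icc 1 (t+3)).erase i)).image (Equiv.swap i j) =
      Finset.Icc 1 (t+3) := by
    rw [← hQ, image_swap_swap]
  ext F
  simp only [Finset.mem_filter, Finset.mem_powerset, Finset.mem_image]
  constructor
  · rintro ⟨hFn, hFc⟩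
    refine ⟨F.image (Equiv.swap i j), ?_, image_swap_swap i j F⟩
    rw [mem_F1_iff]
    constructor
    · intro x hx
      obtain ⟨y, hy, rfl⟩ := Finset.mem_image.1 hx
      exact (swap_pres_Icc hiIc hjIc y).1 (hFn hy)
    · rw [← hP, ← Finset.image_inter _ _ (Equiv.injective _),
        Finset.card_image_of_injective _ (Equiv.injective _)]
      exact hFc
  · rintro ⟨A, hA, rfl⟩
    rw [mem_F1_iff] at hA
    constructor
    · intro x hx
      obtain ⟨y, hy, rfl⟩ := Finset.mem_image.1 hx
      exact (swap_pres_Icc hiIc hjIc y).1 (hA.1 hy)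
    · rw [← hQ, ← Finset.image_inter _ _ (Equiv.injective _),
        Finset.card_image_of_injective _ (Equiv.injective _)]
      exact hA.2

lemma iso_self (n : ℕ) (X : Finset (Finset ℕ)) : Iso n X X := by
  refine ⟨Equiv.refl ℕ, fun x => Iff.rfl, ?_⟩
  simp

lemma shift_eq_F1 {n t i j : ℕ} {G : Finset (Finset ℕ)} (hH : shift i j G ⊆ F1 n t)
    (hcard : G.card = (F1 n t).card) : shift i j G = F1 n t := by
  apply Finset.eq_of_subset_of_card_le hH
  rw [shift_card]
  omega


theorem stmt_9 (n t : ℕ) (hn : t + 4 ≤ n) (G : Finset (Finset ℕ)) (hG : Max3 n t G)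
    (i j : ℕ) (hi : 1 ≤ i) (hin : i ≤ n) (hj : 1 ≤ j) (hjn : j ≤ n)
    (hH : shift i j G ⊆ F1 n t) :
    (∃ F : Finset (Finset ℕ), Iso n (F1 n t) F ∧ G ⊆ F) ∧
    Iso n G (F1 n t) ∧ shift i j G = F1 n t := by
  rcases Nat.eq_zero_or_pos t with ht0 | ht
  · subst ht0
    exact (t0_case hG hH).elim
  have htn : t ≤ n := by omega
  have hiIc : i ∈ Finset.Icc 1 n := Finset.mem_Icc.2 ⟨hi, hin⟩
  have hjIc : j ∈ Finset.Icc 1 n := Finset.mem_Icc.2 ⟨hj, hjn⟩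
  have hGP_of_notmain : ¬(i ∈ Finset.Icc 1 (t+3) ∧ j ∉ Finset.Icc 1 (t+3)) →
      ∀ X ∈ G, t+2 ≤ (X ∩ Finset.Icc 1 (t+3)).card := by
    intro hnm X hX
    by_cases hc : X ∩ {i, j} = {j} ∧ (X.erase j ∪ {i}) ∉ G
    · obtain ⟨hjX, hiX, hij⟩ := shiftSet_cond_facts hX hc
      have hmem := hH (shiftSet_mem (i := i) (j := j) hX)
      rw [shiftSet, if_pos hc] at hmem
      have hcard := ((mem_F1_iff _).1 hmem).2
      by_cases hiP : i ∈ Finset.Icc 1 (t+3)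
      · have hjP : j ∈ Finset.Icc 1 (t+3) := by tauto
        have hsub : (X.erase j ∪ {i}) ∩ Finset.Icc 1 (t+3) ⊆
            insert i ((X ∩ Finset.Icc 1 (t+3)).erase j) := by
          intro x hx
          rw [Finset.mem_inter] at hx
          rcases Finset.mem_union.1 hx.1 with h | h
          · exact Finset.mem_insert_of_mem (Finset.mem_erase.2
              ⟨(Finset.mem_erase.1 h).1, Finset.mem_inter.2 ⟨(Finset.mem_erase.1 h).2, hx.2⟩⟩)
          · exact Finset.mem_insert.2 (Or.inl (Finset.mem_singleton.1 h))
        have h1 := le_trans hcard (Finset.card_le_card hsub)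
        have h2 := Finset.card_insert_le i ((X ∩ Finset.Icc 1 (t+3)).erase j)
        rw [Finset.card_erase_of_mem (Finset.mem_inter.2 ⟨hjX, hjP⟩)] at h2
        have h3 : 1 ≤ (X ∩ Finset.Icc 1 (t+3)).card :=
          Finset.card_pos.2 ⟨j, Finset.mem_inter.2 ⟨hjX, hjP⟩⟩
        omega
      · have hsub : (X.erase j ∪ {i}) ∩ Finset.Icc 1 (t+3) ⊆ X ∩ Finset.Icc 1 (t+3) := by
          intro x hx
          rw [Finset.mem_inter] at hx ⊢
          rcases Finset.mem_union.1 hx.1 with h | h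
          · exact ⟨(Finset.mem_erase.1 h).2, hx.2⟩
          · exact absurd (Finset.mem_singleton.1 h ▸ hx.2) hiP
        exact le_trans hcard (Finset.card_le_card hsub)
    · have hmem := hH (shiftSet_mem (i := i) (j := j) hX)
      rw [shiftSet, if_neg hc] at hmem
      exact ((mem_F1_iff _).1 hmem).2
  have conclude_F1 : (∀ X ∈ G, t+2 ≤ (X ∩ Finset.Icc 1 (t+3)).card) →
      (∃ F : Finset (Finset ℕ), Iso n (F1 n t) F ∧ G ⊆ F) ∧
        Iso n G (F1 n t) ∧ shift i j G = F1 n t := by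
    intro hGP
    have hGeq : G = F1 n t := by
      have h := G_eq_filter hG htn (Finset.Icc 1 (t+3)) (by simp) hGP
      rw [h]; rfl
    have hcard : G.card = (F1 n t).card := by rw [hGeq]
    refine ⟨⟨F1 n t, iso_self n _, by rw [hGeq]⟩, ?_, shift_eq_F1 hH hcard⟩
    rw [hGeq]
    exact iso_self n _
  by_cases hmain : i ∈ Finset.Icc 1 (t+3) ∧ j ∉ Finset.Icc 1 (t+3)
  · by_cases hGP : ∀ X ∈ G, t+2 ≤ (X ∩ Finset.Icc 1 (t+3)).card
    · exact conclude_F1 hGP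
    · push_neg at hGP
      have hGQ : ∀ X ∈ G, t+2 ≤ (X ∩ insert j ((Finset.Icc 1 (t+3)).erase i)).card := by
        by_contra hcon
        push_neg at hcon
        refine main_case hn ht hG hH hmain.1 hmain.2 ?_ ?_
        · obtain ⟨X, h1, h2⟩ := hGP
          exact ⟨X, h1, by omega⟩
        · obtain ⟨X, h1, h2⟩ := hcon
          exact ⟨X, h1, by omega⟩
      have hQc : (insert j ((Finset.Icc 1 (t+3)).erase i)).card = t+3 := by
        rw [Finset.card_insert_of_notMem (fun h => hmain.2 (Finset.mem_erase.1 h).2),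
          Finset.card_erase_of_mem hmain.1]
        have : (Finset.Icc 1 (t+3)).card = t+3 := by simp
        omega
      have hGeq : G = (F1 n t).image (fun A => A.image (Equiv.swap i j)) := by
        rw [G_eq_filter hG htn _ hQc hGQ]
        exact FQ_eq_image hmain.1 hmain.2 hiIc hjIc
      have hdouble : ∀ (S : Finset (Finset ℕ)),
          (S.image (fun A => A.image (Equiv.swap i j))).image
            (fun A => A.image (Equiv.swap i j)) = S := by
        intro S
        rw [Finset.image_image]
        have hcomp : ((fun A : Finset ℕ => A.image (Equiv.swap i j)) ∘
            (fun A : Finset ℕ => A.image (Equiv.swap i j))) = id := by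
          funext A
          simp [Function.comp_def, image_swap_swap]
        rw [hcomp, Finset.image_id]
      have hcard : G.card = (F1 n t).card := by
        rw [hGeq]
        apply Finset.card_image_of_injOn
        intro A hA B hB he
        have h2 := congrArg (fun s : Finset ℕ => s.image (Equiv.swap i j)) he
        simpa [image_swap_swap] using h2
      refine ⟨⟨(F1 n t).image (fun A => A.image (Equiv.swap i j)),
        ⟨Equiv.swap i j, swap_pres_Icc hiIc hjIc, rfl⟩, by rw [← hGeq]⟩,
        ⟨Equiv.swap i j, swap_pres_Icc hiIc hjIc, ?_⟩, shift_eq_F1 hH hcard⟩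
      rw [hGeq, hdouble]
  · exact conclude_F1 (hGP_of_notmain hmain)
end
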